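/- For all real numbers a and b with −0.90269 ≤ a ≤ −0.90254 and 8.32420 ≤ b ≤ 8.32462, the cubic polynomial f_4(q) = 2(3q+1)q² − (a+bi)(1−q)(4q² + 3q + 1) in the complex variable q has exactly one root z with |z| > 1 (and no root with |z| = 1). -/

import Mathlib

open Polynomial

/-- A finite loopless multigraph: a finite vertex type, a finite edge type, and an
incidence map sending each edge to the (unordered) pair of its two distinct endpoints. -/
structure Multigraph where
  V : Type
  E : Type
  [fintypeV : Fintype V]
  [decEqV : DecidableEq V]
  [fintypeE : Fintype E]
  [decEqE : DecidableEq E]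
  ends : E → Sym2 V
  loopless : ∀ e, ¬ (ends e).IsDiag

attribute [instance] Multigraph.fintypeV Multigraph.decEqV Multigraph.fintypeE Multigraph.decEqE

namespace Multigraph

/-- The simple graph on `G.V` in which `x` and `y` are adjacent exactly when some edge
of the subset `S` joins them.  (A multigraph spanning subgraph `(V, S)` is connected
iff this simple graph is connected.) -/
def spanningGraph (G : Multigraph) (S : Set G.E) : SimpleGraph G.V where
  Adj x y := x ≠ y ∧ ∃ e ∈ S, G.ends e = s(x, y)
  symm := by
    constructor
    rintro x y ⟨hxy, e, he, h⟩
    exact ⟨hxy.symm, e, he, by rw [h, Sym2.eq_swap]⟩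
  loopless := by constructor; rintro x ⟨hx, -⟩; exact hx rfl

/-- Connectedness of a multigraph. -/
def Connected (G : Multigraph) : Prop := (G.spanningGraph Set.univ).Connected

open scoped Classical in
/-- The all-terminal reliability polynomial of `G`, in the variable `q = X`:
`Rel(G;q) = Σ_{E' ⊆ E, (V,E') connected} (1-q)^{|E'|} q^{|E|-|E'|}`. -/
noncomputable def Rel (G : Multigraph) : Polynomial ℂ :=
  ∑ S : Finset G.E, if (G.spanningGraph ↑S).Connected then
    (1 - X) ^ S.card * X ^ (Fintype.card G.E - S.card) else 0

/-- The condition that the spanning subgraph `(V, S)` has exactly two connected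
components, one containing `u` and the other containing `v`: equivalently, `u` and `v`
cannot communicate, and every vertex can communicate with `u` or with `v`. -/
def SplitState (G : Multigraph) (u v : G.V) (S : Set G.E) : Prop :=
  ¬ (G.spanningGraph S).Reachable u v ∧
    ∀ w : G.V, (G.spanningGraph S).Reachable w u ∨ (G.spanningGraph S).Reachable w v

open scoped Classical in
/-- The `{u,v}`-split reliability polynomial of `G`, in the variable `q = X`. -/
noncomputable def spRel (G : Multigraph) (u v : G.V) : Polynomial ℂ :=
  ∑ S : Finset G.E, if G.SplitState u v ↑S then
    (1 - X) ^ S.card * X ^ (Fintype.card G.E - S.card) else 0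

/-- The condition that every connected component of the spanning subgraph `(V, S)`
contains exactly one vertex of `K`. -/
def SplitStateSet (G : Multigraph) (K : Set G.V) (S : Set G.E) : Prop :=
  ∀ w : G.V, ∃! x : G.V, x ∈ K ∧ (G.spanningGraph S).Reachable w x

open scoped Classical in
/-- The `K`-split reliability polynomial of `G`, in the variable `q = X`. -/
noncomputable def spRelSet (G : Multigraph) (K : Set G.V) : Polynomial ℂ :=
  ∑ S : Finset G.E, if G.SplitStateSet K ↑S then
    (1 - X) ^ S.card * X ^ (Fintype.card G.E - S.card) else 0

open scoped Classical in
/-- `F i` = the number of `i`-subsets of edges whose removal leaves `G` connected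
(the F-vector of the cographic matroid of `G`). -/
noncomputable def Fnum (G : Multigraph) (i : ℕ) : ℕ :=
  (Finset.univ.filter fun S : Finset G.E =>
    S.card = i ∧ (G.spanningGraph ↑(Finset.univ \ S)).Connected).card

/-- `G` is `k`-edge-connected: it is connected and remains connected after deleting
any set of fewer than `k` edges. -/
def EdgeConnected (G : Multigraph) (k : ℕ) : Prop :=
  G.Connected ∧ ∀ D : Finset G.E, D.card < k → (G.spanningGraph {e | e ∉ (D : Set G.E)}).Connected

/-- `G` is 2-connected: connected, at least 3 vertices, and deleting any single vertex
leaves it connected. -/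
def TwoConnected (G : Multigraph) : Prop :=
  G.Connected ∧ 3 ≤ Fintype.card G.V ∧
    ∀ v : G.V, ((G.spanningGraph Set.univ).induce {w : G.V | w ≠ v}).Connected

/-- The (induced) subgraph of `G` on a set `B` of vertices is connected and has no
cut vertex. -/
def NoCutVertex (G : Multigraph) (B : Set G.V) : Prop :=
  ((G.spanningGraph Set.univ).induce B).Connected ∧
    ∀ v ∈ B, ((G.spanningGraph Set.univ).induce (B \ {v})).Connected

/-- `B` is the vertex set of a block of `G`: a maximal subgraph with no cut vertex
(equivalently, a maximal 2-connected subgraph or a bridge together with its endpoints). -/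
def IsBlock (G : Multigraph) (B : Set G.V) : Prop :=
  G.NoCutVertex B ∧ ∀ C : Set G.V, B ⊆ C → G.NoCutVertex C → C = B

/-- Build a multigraph from a symmetric multiplicity function on unordered pairs. -/
def ofWeight (V : Type) [Fintype V] [DecidableEq V] (w : Sym2 V → ℕ)
    (hw : ∀ p : Sym2 V, p.IsDiag → w p = 0) : Multigraph where
  V := V
  E := Σ p : Sym2 V, Fin (w p)
  ends e := e.1
  loopless := by
    rintro ⟨p, i⟩ h
    rw [hw p h] at i
    exact i.elim0

/-- The complete graph on `n` vertices. -/
def completeGraph (n : ℕ) : Multigraph :=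
  ofWeight (Fin n) (fun p => if p.IsDiag then 0 else 1) (by intro p hp; simp [hp])

/-- `completeMinus n` is the complete graph on `n + 2` vertices minus the edge joining
the vertices `0` and `1`; that is, it is `K_{n+2}^-`, with `u = 0` and `v = 1` its
unique nonadjacent pair of vertices. -/
def completeMinus (n : ℕ) : Multigraph :=
  ofWeight (Fin (n + 2))
    (fun p => if p.IsDiag ∨ p = s((0 : Fin (n + 2)), 1) then 0 else 1)
    (by intro p hp; simp [hp])

/-- The multiplicity function of `G_{m,n}^{a,b}`: `a` parallel edges inside each part,
`b` parallel edges across, no loops. -/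
def gWeight (m n a b : ℕ) : Sym2 (Fin m ⊕ Fin n) → ℕ :=
  Sym2.lift ⟨fun x y => if x = y then 0 else if x.isLeft = y.isLeft then a else b, by
    intro x y
    by_cases h : x = y
    · simp [h]
    · have h' : y ≠ x := fun hh => h hh.symm
      have hl : (x.isLeft = y.isLeft) = (y.isLeft = x.isLeft) := propext ⟨Eq.symm, Eq.symm⟩
      simp only [if_neg h, if_neg h', hl]⟩

/-- The multigraph `G_{m,n}^{a,b}`: disjoint complete graphs `K_m` and `K_n` with each
edge replaced by `a` parallel edges, and every pair of vertices in different parts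
joined by `b` parallel edges. -/
def Gmnab (m n a b : ℕ) : Multigraph :=
  ofWeight (Fin m ⊕ Fin n) (gWeight m n a b) (by
    intro p hp
    induction p using Sym2.ind with
    | _ x y =>
      rw [Sym2.mk_isDiag_iff] at hp
      simp [gWeight, Sym2.lift_mk, hp])

/-- Replace every edge of `G` by a bundle of `k` parallel edges. -/
def bundle (G : Multigraph) (k : ℕ) : Multigraph where
  V := G.V
  E := G.E × Fin k
  ends e := G.ends e.1
  loopless e := G.loopless e.1

/-- The vertex map used in an edge substitution: the endpoints `u`, `v` of the gadget
are identified with the two ends (given by the orientation `ori`) of the edge `e`, and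
the internal vertices of the gadget get their own private copies. -/
def subVertex (G H : Multigraph) (u v : H.V) (ori : G.E → G.V × G.V) (e : G.E)
    (x : H.V) : G.V ⊕ (G.E × {x : H.V // x ≠ u ∧ x ≠ v}) :=
  if hx : x = u then Sum.inl (ori e).1
  else if hx' : x = v then Sum.inl (ori e).2
  else Sum.inr (e, ⟨x, hx, hx'⟩)

/-- The edge substitution `G[H(u,v)]` determined by the orientation `ori` of the edges
of `G`: every edge `{x,y}` of `G` is replaced by a copy of `H`, identifying `u` with
`x` and `v` with `y`. -/
def edgeSub (G H : Multigraph) (u v : H.V) (ori : G.E → G.V × G.V)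
    (hori : ∀ e, s((ori e).1, (ori e).2) = G.ends e) : Multigraph where
  V := G.V ⊕ (G.E × {x : H.V // x ≠ u ∧ x ≠ v})
  E := G.E × H.E
  ends f := (H.ends f.2).map (subVertex G H u v ori f.1)
  loopless := by
    rintro ⟨e, f⟩ h
    have hne : (ori e).1 ≠ (ori e).2 := by
      have hd := G.loopless e
      rw [← hori e, Sym2.mk_isDiag_iff] at hd
      exact hd
    have hinj : Function.Injective (subVertex G H u v ori e) := by
      intro x y hxy
      unfold subVertex at hxy
      split_ifs at hxy <;> simp_all
    rw [Sym2.isDiag_map hinj] at h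
    exact H.loopless f h

/-- The disjoint union of a finite family of multigraphs. -/
def disjUnion {k : ℕ} (H : Fin k → Multigraph) : Multigraph where
  V := Σ i, (H i).V
  E := Σ i, (H i).E
  ends e := ((H e.1).ends e.2).map (Sigma.mk e.1)
  loopless := by
    rintro ⟨i, e⟩ h
    rw [Sym2.isDiag_map sigma_mk_injective] at h
    exact (H i).loopless e h

end Multigraph

namespace Multigraph

/-- The first vertex (`u`) of the unique nonadjacent pair of `completeMinus n`. -/
def cmU (n : ℕ) : (completeMinus n).V := (0 : Fin (n + 2))

/-- The second vertex (`v`) of the unique nonadjacent pair of `completeMinus n`. -/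
def cmV (n : ℕ) : (completeMinus n).V := (1 : Fin (n + 2))

end Multigraph

open Polynomial

/-- The cubic polynomial `f₄(q) = 2(3q+1)q² − (a+bi)(1−q)(4q²+3q+1)`. -/
noncomputable def f4 (a b : ℝ) : Polynomial ℂ :=
  C 2 * (3 * X + 1) * X ^ 2 -
    C ((a : ℂ) + (b : ℂ) * Complex.I) * (1 - X) * (4 * X ^ 2 + 3 * X + 1)

namespace F4Cert
open Complex

noncomputable def W1 : ℂ := ((-389517/1000000 : ℝ) : ℂ) + ((323620/1000000 : ℝ) : ℂ) * Complex.I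
noncomputable def W2 : ℂ := ((-361206/1000000 : ℝ) : ℂ) + ((-338601/1000000 : ℝ) : ℂ) * Complex.I
noncomputable def W3 : ℂ := ((993219/1000000 : ℝ) : ℂ) + ((119555/1000000 : ℝ) : ℂ) * Complex.I

lemma abs_le_of_normSq_le {u : ℂ} {r : ℝ} (hr : 0 ≤ r) (h : normSq u ≤ r^2) :
    ‖u‖ ≤ r := by
  nlinarith [Complex.sq_norm u, norm_nonneg u]

lemma le_abs_of_le_normSq {u : ℂ} {r : ℝ} (hr : 0 ≤ r) (h : r^2 ≤ normSq u) :
    r ≤ ‖u‖ := by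
  nlinarith [Complex.sq_norm u, norm_nonneg u]

lemma normSq_lt_of_abs_lt {u : ℂ} {r : ℝ} (hr : 0 ≤ r) (h : r < ‖u‖) :
    r^2 < normSq u := by
  nlinarith [Complex.sq_norm u, norm_nonneg u]

lemma near (L u1 u2 u3 : ℂ) (ε R : ℝ) (hR : 0 < R)
    (hL : (1114:ℝ) ≤ normSq L)
    (hε : normSq (L * (u1 * (u2 * u3))) ≤ ε)
    (hC : ε ≤ 1114 * R^6) :
    ‖u1‖ ≤ R ∨ ‖u2‖ ≤ R ∨ ‖u3‖ ≤ R := by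
  by_contra hcon
  push_neg at hcon
  obtain ⟨h1, h2, h3⟩ := hcon
  have n1 : R^2 < normSq u1 := normSq_lt_of_abs_lt hR.le h1
  have n2 : R^2 < normSq u2 := normSq_lt_of_abs_lt hR.le h2
  have n3 : R^2 < normSq u3 := normSq_lt_of_abs_lt hR.le h3
  have key : normSq (L * (u1 * (u2 * u3)))
      = normSq L * (normSq u1 * (normSq u2 * normSq u3)) := by
    simp [Complex.normSq_mul]
  have hA : R^2 * (R^2 * R^2) < normSq u1 * (normSq u2 * normSq u3) :=
    mul_lt_mul'' n1 (mul_lt_mul'' n2 n3 (by positivity) (by positivity))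
      (by positivity) (by positivity)
  have hB : 1114 * (R^2 * (R^2 * R^2))
      < normSq L * (normSq u1 * (normSq u2 * normSq u3)) :=
    mul_lt_mul' hL hA (by positivity) (by linarith)
  have hr6 : R^2 * (R^2 * R^2) = R^6 := by ring
  rw [key] at hε
  nlinarith

lemma sep {w w' z : ℂ} {R R' : ℝ} (h : ‖w - z‖ ≤ R)
    (h' : ‖w' - z‖ ≤ R')
    (hd : (R + R')^2 < normSq (w - w')) : False := by
  have ht : ‖w - w'‖ ≤ R + R' := by
    have t1 : ‖w - w'‖ ≤ ‖w - z‖ + ‖z - w'‖ :=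
      norm_sub_le_norm_sub_add_norm_sub w z w'
    have t2 : ‖z - w'‖ = ‖w' - z‖ := norm_sub_rev z w'
    linarith
  nlinarith [Complex.sq_norm (w - w'), norm_nonneg (w - w')]

lemma sep12 {x : ℂ} (h1 : ‖W1 - x‖ ≤ 0.01) (h2 : ‖W2 - x‖ ≤ 0.01) :
    False := by
  refine sep h1 h2 ?_
  simp only [W1, W2, Complex.normSq_apply, Complex.add_re, Complex.add_im, Complex.sub_re,
    Complex.sub_im, Complex.mul_re, Complex.mul_im, Complex.I_re, Complex.I_im,
    Complex.ofReal_re, Complex.ofReal_im]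
  norm_num

lemma sep13 {x : ℂ} (h1 : ‖W1 - x‖ ≤ 0.01) (h3 : ‖W3 - x‖ ≤ 0.02) :
    False := by
  refine sep h1 h3 ?_
  simp only [W1, W3, Complex.normSq_apply, Complex.add_re, Complex.add_im, Complex.sub_re,
    Complex.sub_im, Complex.mul_re, Complex.mul_im, Complex.I_re, Complex.I_im,
    Complex.ofReal_re, Complex.ofReal_im]
  norm_num

lemma sep23 {x : ℂ} (h2 : ‖W2 - x‖ ≤ 0.01) (h3 : ‖W3 - x‖ ≤ 0.02) :
    False := by
  refine sep h2 h3 ?_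
  simp only [W2, W3, Complex.normSq_apply, Complex.add_re, Complex.add_im, Complex.sub_re,
    Complex.sub_im, Complex.mul_re, Complex.mul_im, Complex.I_re, Complex.I_im,
    Complex.ofReal_re, Complex.ofReal_im]
  norm_num

lemma small1 {z : ℂ} (h : ‖W1 - z‖ ≤ 0.01) : ‖z‖ < 1 := by
  have hw : ‖W1‖ ≤ 0.507 := by
    refine abs_le_of_normSq_le (by norm_num) ?_
    simp only [W1, Complex.normSq_apply, Complex.add_re, Complex.add_im,
      Complex.mul_re, Complex.mul_im, Complex.I_re, Complex.I_im,
      Complex.ofReal_re, Complex.ofReal_im]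
    norm_num
  have t1 : ‖z‖ ≤ ‖W1‖ + ‖z - W1‖ := by
    have := norm_add_le W1 (z - W1)
    simpa using this
  have t2 : ‖z - W1‖ = ‖W1 - z‖ := norm_sub_rev z W1
  linarith

lemma small2 {z : ℂ} (h : ‖W2 - z‖ ≤ 0.01) : ‖z‖ < 1 := by
  have hw : ‖W2‖ ≤ 0.496 := by
    refine abs_le_of_normSq_le (by norm_num) ?_
    simp only [W2, Complex.normSq_apply, Complex.add_re, Complex.add_im,
      Complex.mul_re, Complex.mul_im, Complex.I_re, Complex.I_im,
      Complex.ofReal_re, Complex.ofReal_im]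
    norm_num
  have t1 : ‖z‖ ≤ ‖W2‖ + ‖z - W2‖ := by
    have := norm_add_le W2 (z - W2)
    simpa using this
  have t2 : ‖z - W2‖ = ‖W2 - z‖ := norm_sub_rev z W2
  linarith

lemma far31 {z : ℂ} (h : ‖W1 - z‖ ≤ 0.01) : (1.38:ℝ) ≤ ‖W3 - z‖ := by
  have hd : (1.39:ℝ) ≤ ‖W3 - W1‖ := by
    refine le_abs_of_le_normSq (by norm_num) ?_
    simp only [W1, W3, Complex.normSq_apply, Complex.add_re, Complex.add_im, Complex.sub_re,
      Complex.sub_im, Complex.mul_re, Complex.mul_im, Complex.I_re, Complex.I_im,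
      Complex.ofReal_re, Complex.ofReal_im]
    norm_num
  have t1 : ‖W3 - W1‖ ≤ ‖W3 - z‖ + ‖z - W1‖ :=
    norm_sub_le_norm_sub_add_norm_sub W3 z W1
  have t2 : ‖z - W1‖ = ‖W1 - z‖ := norm_sub_rev z W1
  linarith

lemma far32 {z : ℂ} (h : ‖W2 - z‖ ≤ 0.01) : (1.41:ℝ) ≤ ‖W3 - z‖ := by
  have hd : (1.42:ℝ) ≤ ‖W3 - W2‖ := by
    refine le_abs_of_le_normSq (by norm_num) ?_
    simp only [W2, W3, Complex.normSq_apply, Complex.add_re, Complex.add_im, Complex.sub_re,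
      Complex.sub_im, Complex.mul_re, Complex.mul_im, Complex.I_re, Complex.I_im,
      Complex.ofReal_re, Complex.ofReal_im]
    norm_num
  have t1 : ‖W3 - W2‖ ≤ ‖W3 - z‖ + ‖z - W2‖ :=
    norm_sub_le_norm_sub_add_norm_sub W3 z W2
  have t2 : ‖z - W2‖ = ‖W2 - z‖ := norm_sub_rev z W2
  linarith

lemma big3 (L u v z : ℂ) (hL : (1114:ℝ) ≤ normSq L)
    (hb : normSq (L * ((W3 - z) * (u * v))) ≤ 6.6e-8)
    (hu : (1.38:ℝ) ≤ ‖u‖) (hv : (1.41:ℝ) ≤ ‖v‖) :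
    1 < ‖z‖ := by
  have hu2 : (1.9044:ℝ) ≤ normSq u := by nlinarith [Complex.sq_norm u]
  have hv2 : (1.9881:ℝ) ≤ normSq v := by nlinarith [Complex.sq_norm v]
  have key : normSq (L * ((W3 - z) * (u * v)))
      = normSq L * (normSq (W3 - z) * (normSq u * normSq v)) := by
    simp [Complex.normSq_mul]
  have c1 : 1114 * (normSq (W3 - z) * (1.9044 * 1.9881))
      ≤ normSq L * (normSq (W3 - z) * (normSq u * normSq v)) := by
    refine mul_le_mul hL ?_ (mul_nonneg (Complex.normSq_nonneg _) (by norm_num)) (Complex.normSq_nonneg L)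
    refine mul_le_mul_of_nonneg_left ?_ (Complex.normSq_nonneg _)
    exact mul_le_mul hu2 hv2 (by norm_num) (Complex.normSq_nonneg u)
  have h0 : normSq (W3 - z) ≤ (5e-6 : ℝ)^2 := by
    rw [key] at hb
    nlinarith [Complex.normSq_nonneg (W3 - z)]
  have habs : ‖W3 - z‖ ≤ 5e-6 := abs_le_of_normSq_le (by norm_num) h0
  have hw3 : (1.00038:ℝ) ≤ ‖W3‖ := by
    refine le_abs_of_le_normSq (by norm_num) ?_
    simp only [W3, Complex.normSq_apply, Complex.add_re, Complex.add_im,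
      Complex.mul_re, Complex.mul_im, Complex.I_re, Complex.I_im,
      Complex.ofReal_re, Complex.ofReal_im]
    norm_num
  have t1 : ‖W3‖ ≤ ‖z‖ + ‖W3 - z‖ := by
    have := norm_add_le z (W3 - z)
    simpa using this
  linarith

lemma conclude (q : Polynomial ℂ) [DecidablePred fun z : ℂ => 1 < ‖z‖]
    (hq : q ≠ 0) (L x y z : ℂ)
    (hL : (1114:ℝ) ≤ normSq L)
    (hroots : q.roots = {x, y, z})
    (h1 : ‖W1 - x‖ ≤ 0.01)
    (h2 : ‖W2 - y‖ ≤ 0.01)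
    (hb3 : normSq (L * ((W3 - z) * ((W3 - x) * (W3 - y)))) ≤ 6.6e-8) :
    Multiset.card (q.roots.filter fun w => 1 < ‖w‖) = 1 ∧
      ∀ w : ℂ, q.eval w = 0 → ‖w‖ ≠ 1 := by
  have hx : ‖x‖ < 1 := small1 h1
  have hy : ‖y‖ < 1 := small2 h2
  have hzz : 1 < ‖z‖ := big3 L (W3 - x) (W3 - y) z hL hb3 (far31 h1) (far32 h2)
  constructor
  · rw [hroots]
    have e : Multiset.filter (fun w => 1 < ‖w‖) ({x, y, z} : Multiset ℂ) = {z} := by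
      simp only [Multiset.insert_eq_cons]
      rw [Multiset.filter_cons_of_neg (p := fun w : ℂ => 1 < ‖w‖) _ (not_lt.mpr hx.le),
        Multiset.filter_cons_of_neg (p := fun w : ℂ => 1 < ‖w‖) _ (not_lt.mpr hy.le),
        Multiset.filter_singleton, if_pos hzz]
    rw [e]
    simp
  · intro w hw
    have hmem : w ∈ q.roots := by
      rw [Polynomial.mem_roots']
      exact ⟨hq, hw⟩
    rw [hroots] at hmem
    simp only [Multiset.insert_eq_cons, Multiset.mem_cons, Multiset.mem_singleton] at hmem
    rcases hmem with rfl | rfl | rfl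
    · exact ne_of_lt hx
    · exact ne_of_lt hy
    · exact ne_of_gt hzz

lemma perm3_213 {α : Type*} (x y z : α) : ({x, y, z} : Multiset α) = {y, x, z} := by
  simp only [Multiset.insert_eq_cons]
  exact Multiset.cons_swap x y _

lemma perm3_132 {α : Type*} (x y z : α) : ({x, y, z} : Multiset α) = {x, z, y} := by
  simp only [Multiset.insert_eq_cons]
  congr 1
  rw [show ({z} : Multiset α) = z ::ₘ 0 from rfl, show ({y} : Multiset α) = y ::ₘ 0 from rfl]
  exact Multiset.cons_swap y z 0

lemma perm3_231 {α : Type*} (x y z : α) : ({x, y, z} : Multiset α) = {y, z, x} := by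
  rw [perm3_213, perm3_132]

lemma perm3_312 {α : Type*} (x y z : α) : ({x, y, z} : Multiset α) = {z, x, y} := by
  rw [perm3_132, perm3_213]

lemma perm3_321 {α : Type*} (x y z : α) : ({x, y, z} : Multiset α) = {z, y, x} := by
  rw [perm3_132, perm3_213, perm3_132]

lemma bound1 (a b : ℝ) (ha1 : -0.90269 ≤ a) (ha2 : a ≤ -0.90254)
    (hb1 : 8.32420 ≤ b) (hb2 : b ≤ 8.32462) :
    normSq ((6 + 4*((a:ℂ)+(b:ℂ)*Complex.I))*W1^3 + (2 - ((a:ℂ)+(b:ℂ)*Complex.I))*W1^2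
      - 2*((a:ℂ)+(b:ℂ)*Complex.I)*W1 - ((a:ℂ)+(b:ℂ)*Complex.I)) ≤ 1e-9 := by
  have hre : ((6 + 4*((a:ℂ)+(b:ℂ)*Complex.I))*W1^3 + (2 - ((a:ℂ)+(b:ℂ)*Complex.I))*W1^2
      - 2*((a:ℂ)+(b:ℂ)*Complex.I)*W1 - ((a:ℂ)+(b:ℂ)*Complex.I)).re
      = 236843652632218961/500000000000000000 - a * (3706542641177013/250000000000000000) + b * (-731366240131527/12500000000000000) := by
    simp [W1, Complex.add_re, Complex.add_im, Complex.sub_re, Complex.sub_im,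
      Complex.mul_re, Complex.mul_im, Complex.ofReal_re, Complex.ofReal_im,
      pow_succ, pow_zero]
    ring_nf
  have him : ((6 + 4*((a:ℂ)+(b:ℂ)*Complex.I))*W1^3 + (2 - ((a:ℂ)+(b:ℂ)*Complex.I))*W1^2
      - 2*((a:ℂ)+(b:ℂ)*Complex.I)*W1 - ((a:ℂ)+(b:ℂ)*Complex.I)).im
      = 4405887700894581/25000000000000000 - a * (-731366240131527/12500000000000000) - b * (3706542641177013/250000000000000000) := by
    simp [W1, Complex.add_re, Complex.add_im, Complex.sub_re, Complex.sub_im,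
      Complex.mul_re, Complex.mul_im, Complex.ofReal_re, Complex.ofReal_im,
      pow_succ, pow_zero]
    ring_nf
  rw [Complex.normSq_apply, hre, him]
  have h1 : 236843652632218961/500000000000000000 - a * (3706542641177013/250000000000000000) + b * (-731366240131527/12500000000000000) ≤ 277/10000000 := by linarith
  have h2 : -(277/10000000 : ℝ) ≤ 236843652632218961/500000000000000000 - a * (3706542641177013/250000000000000000) + b * (-731366240131527/12500000000000000) := by linarith
  have h3 : 4405887700894581/25000000000000000 - a * (-731366240131527/12500000000000000) - b * (3706542641177013/250000000000000000) ≤ 126/10000000 := by linarith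
  have h4 : -(126/10000000 : ℝ) ≤ 4405887700894581/25000000000000000 - a * (-731366240131527/12500000000000000) - b * (3706542641177013/250000000000000000) := by linarith
  nlinarith [h1, h2, h3, h4]

lemma bound2 (a b : ℝ) (ha1 : -0.90269 ≤ a) (ha2 : a ≤ -0.90254)
    (hb1 : 8.32420 ≤ b) (hb2 : b ≤ 8.32462) :
    normSq ((6 + 4*((a:ℂ)+(b:ℂ)*Complex.I))*W2^3 + (2 - ((a:ℂ)+(b:ℂ)*Complex.I))*W2^2
      - 2*((a:ℂ)+(b:ℂ)*Complex.I)*W2 - ((a:ℂ)+(b:ℂ)*Complex.I)) ≤ 4e-10 := by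
  have hre : ((6 + 4*((a:ℂ)+(b:ℂ)*Complex.I))*W2^3 + (2 - ((a:ℂ)+(b:ℂ)*Complex.I))*W2^2
      - 2*((a:ℂ)+(b:ℂ)*Complex.I)*W2 - ((a:ℂ)+(b:ℂ)*Complex.I)).re
      = 123576111873815103/250000000000000000 - a * (-1879622264396701/125000000000000000) + b * (-14437375722483693/250000000000000000) := by
    simp [W2, Complex.add_re, Complex.add_im, Complex.sub_re, Complex.sub_im,
      Complex.mul_re, Complex.mul_im, Complex.ofReal_re, Complex.ofReal_im,
      pow_succ, pow_zero]
    ring_nf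
  have him : ((6 + 4*((a:ℂ)+(b:ℂ)*Complex.I))*W2^3 + (2 - ((a:ℂ)+(b:ℂ)*Complex.I))*W2^2
      - 2*((a:ℂ)+(b:ℂ)*Complex.I)*W2 - ((a:ℂ)+(b:ℂ)*Complex.I)).im
      = -36522878011548921/500000000000000000 - a * (-14437375722483693/250000000000000000) - b * (-1879622264396701/125000000000000000) := by
    simp [W2, Complex.add_re, Complex.add_im, Complex.sub_re, Complex.sub_im,
      Complex.mul_re, Complex.mul_im, Complex.ofReal_re, Complex.ofReal_im,
      pow_succ, pow_zero]
    ring_nf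
  rw [Complex.normSq_apply, hre, him]
  have h1 : 123576111873815103/250000000000000000 - a * (-1879622264396701/125000000000000000) + b * (-14437375722483693/250000000000000000) ≤ 146/10000000 := by linarith
  have h2 : -(146/10000000 : ℝ) ≤ 123576111873815103/250000000000000000 - a * (-1879622264396701/125000000000000000) + b * (-14437375722483693/250000000000000000) := by linarith
  have h3 : -36522878011548921/500000000000000000 - a * (-14437375722483693/250000000000000000) - b * (-1879622264396701/125000000000000000) ≤ 102/10000000 := by linarith
  have h4 : -(102/10000000 : ℝ) ≤ -36522878011548921/500000000000000000 - a * (-14437375722483693/250000000000000000) - b * (-1879622264396701/125000000000000000) := by linarith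
  nlinarith [h1, h2, h3, h4]

lemma bound3 (a b : ℝ) (ha1 : -0.90269 ≤ a) (ha2 : a ≤ -0.90254)
    (hb1 : 8.32420 ≤ b) (hb2 : b ≤ 8.32462) :
    normSq ((6 + 4*((a:ℂ)+(b:ℂ)*Complex.I))*W3^3 + (2 - ((a:ℂ)+(b:ℂ)*Complex.I))*W3^2
      - 2*((a:ℂ)+(b:ℂ)*Complex.I)*W3 - ((a:ℂ)+(b:ℂ)*Complex.I)) ≤ 6.6e-8 := by
  have hre : ((6 + 4*((a:ℂ)+(b:ℂ)*Complex.I))*W3^3 + (2 - ((a:ℂ)+(b:ℂ)*Complex.I))*W3^2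
      - 2*((a:ℂ)+(b:ℂ)*Complex.I)*W3 - ((a:ℂ)+(b:ℂ)*Complex.I)).re
      = 1891903107868517551/250000000000000000 - a * (26225967691827483/125000000000000000) + b * (-23295878141666319/25000000000000000) := by
    simp [W3, Complex.add_re, Complex.add_im, Complex.sub_re, Complex.sub_im,
      Complex.mul_re, Complex.mul_im, Complex.ofReal_re, Complex.ofReal_im,
      pow_succ, pow_zero]
    ring_nf
  have him : ((6 + 4*((a:ℂ)+(b:ℂ)*Complex.I))*W3^3 + (2 - ((a:ℂ)+(b:ℂ)*Complex.I))*W3^2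
      - 2*((a:ℂ)+(b:ℂ)*Complex.I)*W3 - ((a:ℂ)+(b:ℂ)*Complex.I)).im
      = 129381388565748957/50000000000000000 - a * (-23295878141666319/25000000000000000) - b * (26225967691827483/125000000000000000) := by
    simp [W3, Complex.add_re, Complex.add_im, Complex.sub_re, Complex.sub_im,
      Complex.mul_re, Complex.mul_im, Complex.ofReal_re, Complex.ofReal_im,
      pow_succ, pow_zero]
    ring_nf
  rw [Complex.normSq_apply, hre, him]
  have h1 : 1891903107868517551/250000000000000000 - a * (26225967691827483/125000000000000000) + b * (-23295878141666319/25000000000000000) ≤ 222/1000000 := by linarith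
  have h2 : -(222/1000000 : ℝ) ≤ 1891903107868517551/250000000000000000 - a * (26225967691827483/125000000000000000) + b * (-23295878141666319/25000000000000000) := by linarith
  have h3 : 129381388565748957/50000000000000000 - a * (-23295878141666319/25000000000000000) - b * (26225967691827483/125000000000000000) ≤ 128/1000000 := by linarith
  have h4 : -(128/1000000 : ℝ) ≤ 129381388565748957/50000000000000000 - a * (-23295878141666319/25000000000000000) - b * (26225967691827483/125000000000000000) := by linarith
  nlinarith [h1, h2, h3, h4]

end F4Cert

open F4Cert in
open scoped Classical in
/-- For all real `a, b` with `−0.90269 ≤ a ≤ −0.90254` and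
`8.32420 ≤ b ≤ 8.32462`, the cubic polynomial `f₄` has exactly one root `z` with
`|z| > 1` (counted with multiplicity), and no root with `|z| = 1`. -/
theorem f4_one_root_outside (a b : ℝ)
    (ha1 : -0.90269 ≤ a) (ha2 : a ≤ -0.90254)
    (hb1 : 8.32420 ≤ b) (hb2 : b ≤ 8.32462) :
    Multiset.card ((f4 a b).roots.filter fun z => 1 < ‖z‖) = 1 ∧
      ∀ z : ℂ, (f4 a b).eval z = 0 → ‖z‖ ≠ 1 := by
  classical
  set c : ℂ := (a:ℂ) + (b:ℂ)*Complex.I with hc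
  have hP : f4 a b = C (6+4*c) * X^3 + C (2-c) * X^2 - C (2*c) * X - C c := by
    rw [f4, hc]
    simp only [map_add, map_mul, map_sub, map_ofNat, map_one]
    ring
  have hL0 : (6+4*c) ≠ 0 := by
    have him : (6+4*c).im = 4*b := by rw [hc]; simp
    intro h
    rw [h] at him
    simp at him
    linarith
  have hdeg : (f4 a b).natDegree = 3 := by
    rw [hP]
    compute_degree!
  have hne : f4 a b ≠ 0 := fun h => by simp [h] at hdeg
  have hsplit : Splits (f4 a b) := IsAlgClosed.splits _
  have hcard : Multiset.card (f4 a b).roots = 3 := by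
    rw [(Polynomial.splits_iff_card_roots).mp hsplit, hdeg]
  obtain ⟨z1, z2, z3, hz⟩ := Multiset.card_eq_three.mp hcard
  have hlc : (f4 a b).leadingCoeff = 6+4*c := by
    rw [Polynomial.leadingCoeff, hdeg, hP]
    simp only [coeff_add, coeff_sub, coeff_C_mul, coeff_X_pow, coeff_C, coeff_X]
    norm_num
  have hfac := hsplit.eq_prod_roots
  rw [hlc, hz] at hfac
  have hfac' : f4 a b = C (6+4*c) * ((X - C z1) * ((X - C z2) * (X - C z3))) := by
    rw [hfac]
    simp [Multiset.insert_eq_cons, Multiset.map_cons, Multiset.prod_cons,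
      Multiset.map_singleton, Multiset.prod_singleton]
  have hEv : ∀ w : ℂ, (6+4*c) * ((w - z1) * ((w - z2) * (w - z3)))
      = (6+4*c)*w^3 + (2-c)*w^2 - 2*c*w - c := by
    intro w
    have e1 : eval w (f4 a b) = (6+4*c) * ((w - z1) * ((w - z2) * (w - z3))) := by
      rw [hfac']
      simp
    have e2 : eval w (f4 a b) = (6+4*c)*w^3 + (2-c)*w^2 - 2*c*w - c := by
      rw [hP]
      simp
    exact e1.symm.trans e2
  have hLns : (1114:ℝ) ≤ Complex.normSq (6+4*c) := by
    have hre : (6+4*c).re = 6+4*a := by rw [hc]; simp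
    have him : (6+4*c).im = 4*b := by rw [hc]; simp
    rw [Complex.normSq_apply, hre, him]
    nlinarith
  have hB1 : Complex.normSq ((6+4*c) * ((W1 - z1) * ((W1 - z2) * (W1 - z3)))) ≤ 1e-9 := by
    rw [hEv W1, hc]
    exact bound1 a b ha1 ha2 hb1 hb2
  have hB2 : Complex.normSq ((6+4*c) * ((W2 - z1) * ((W2 - z2) * (W2 - z3)))) ≤ 4e-10 := by
    rw [hEv W2, hc]
    exact bound2 a b ha1 ha2 hb1 hb2
  have hB3 : Complex.normSq ((6+4*c) * ((W3 - z1) * ((W3 - z2) * (W3 - z3)))) ≤ 6.6e-8 := by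
    rw [hEv W3, hc]
    exact bound3 a b ha1 ha2 hb1 hb2
  have hn1 := near (6+4*c) _ _ _ _ 0.01 (by norm_num) hLns hB1 (by norm_num)
  have hn2 := near (6+4*c) _ _ _ _ 0.01 (by norm_num) hLns hB2 (by norm_num)
  have hn3 := near (6+4*c) _ _ _ _ 0.02 (by norm_num) hLns hB3 (by norm_num)
  rcases hn1 with h1|h1|h1 <;> rcases hn2 with h2|h2|h2 <;> rcases hn3 with h3|h3|h3 <;>
  first
  | exact (sep12 h1 h2).elim
  | exact (sep13 h1 h3).elim
  | exact (sep23 h2 h3).elim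
  | exact conclude (f4 a b) hne (6+4*c) z1 z2 z3 hLns (by rw [hz]) h1 h2
      (by rw [show (6+4*c) * ((W3 - z3) * ((W3 - z1) * (W3 - z2)))
            = (6+4*c) * ((W3 - z1) * ((W3 - z2) * (W3 - z3))) from by ring]; exact hB3)
  | exact conclude (f4 a b) hne (6+4*c) z1 z3 z2 hLns (by rw [hz, perm3_132]) h1 h2
      (by rw [show (6+4*c) * ((W3 - z2) * ((W3 - z1) * (W3 - z3)))
            = (6+4*c) * ((W3 - z1) * ((W3 - z2) * (W3 - z3))) from by ring]; exact hB3)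
  | exact conclude (f4 a b) hne (6+4*c) z2 z1 z3 hLns (by rw [hz, perm3_213]) h1 h2
      (by rw [show (6+4*c) * ((W3 - z3) * ((W3 - z2) * (W3 - z1)))
            = (6+4*c) * ((W3 - z1) * ((W3 - z2) * (W3 - z3))) from by ring]; exact hB3)
  | exact conclude (f4 a b) hne (6+4*c) z2 z3 z1 hLns (by rw [hz, perm3_231]) h1 h2
      (by rw [show (6+4*c) * ((W3 - z1) * ((W3 - z2) * (W3 - z3)))
            = (6+4*c) * ((W3 - z1) * ((W3 - z2) * (W3 - z3))) from by ring]; exact hB3)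
  | exact conclude (f4 a b) hne (6+4*c) z3 z1 z2 hLns (by rw [hz, perm3_312]) h1 h2
      (by rw [show (6+4*c) * ((W3 - z2) * ((W3 - z3) * (W3 - z1)))
            = (6+4*c) * ((W3 - z1) * ((W3 - z2) * (W3 - z3))) from by ring]; exact hB3)
  | exact conclude (f4 a b) hne (6+4*c) z3 z2 z1 hLns (by rw [hz, perm3_321]) h1 h2
      (by rw [show (6+4*c) * ((W3 - z1) * ((W3 - z3) * (W3 - z2)))
            = (6+4*c) * ((W3 - z1) * ((W3 - z2) * (W3 - z3))) from by ring]; exact hB3)
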